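/- arXiv:0902.2071 — 3 statements merged into one kernel-verified Lean document; each statement's English description precedes it below -/
import Mathlib

section
/- The set of fundamental elements of the near-regular partial field 𝕌₁ = (ℤ[α, 1/α, 1/(1-α)], ⟨-1, α, 1-α⟩) is exactly {0, 1, α, 1-α, 1/(1-α), α/(α-1), (α-1)/α, 1/α}. -/
/-!
Suppose `u + v = 1` with `u = ε α^i (1-α)^j` and `v = ε' α^k (1-α)^l` in `G`. Specialising `α`
to `2`, `-1` and `1/2`, where `(α, 1-α)` becomes `(2, -1)`, `(-1, 2)` and `(1/2, 1/2)`, gives three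
equations `s 2^m + t 2^n = 1` over `ℚ` with signs `s, t`. Comparing 2-adic valuations, the only
solutions are `1/2 + 1/2`, `2 - 1` and `-1 + 2`. So `(i, k)`, `(j, l)` and `(-(i+j), -(k+l))` all
lie in `{(-1, -1), (1, 0), (0, 1)}`, and the specialisation at `1/2` also fixes `ε`; only six
triples `(ε, i, j)` survive, giving the six fundamental elements other than `0` and `1`.
-/

/-- The transcendental element `α` of `ℚ(α)`. -/
noncomputable def nrAlpha : RatFunc ℚ := RatFunc.X

/-- The near-regular partial field `𝕌₁`, viewed as the subset
`⟨-1, α, 1-α⟩ ∪ {0}` of `ℚ(α)`. -/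
def U1 : Set (RatFunc ℚ) :=
  {x | x = 0 ∨ ∃ (ε : RatFunc ℚ) (i j : ℤ),
    (ε = 1 ∨ ε = -1) ∧ x = ε * nrAlpha ^ i * (1 - nrAlpha) ^ j}

/-- `p` is a fundamental element of `𝕌₁` if `p ∈ 𝕌₁` and `1 - p ∈ 𝕌₁`. -/
def IsFund (p : RatFunc ℚ) : Prop := p ∈ U1 ∧ (1 - p) ∈ U1

universe u

theorem padicValRat_two_mul_two_zpow {s : ℚ} (hs : |s| = 1) (m : ℤ) :
    padicValRat 2 (s * 2 ^ m) = m := by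
  have h2 : padicValRat 2 (2 : ℚ) = 1 := by exact_mod_cast padicValRat.self (p := 2) one_lt_two
  rcases (abs_eq zero_le_one).mp hs with rfl | rfl <;> simp [h2]

theorem eq_of_sign_mul_two_zpow_add_eq_one {s t : ℚ} (hs : |s| = 1) (ht : |t| = 1)
    {m n : ℤ} (h : s * 2 ^ m + t * 2 ^ n = 1) :
    (s = 1 ∧ t = 1 ∧ m = -1 ∧ n = -1) ∨ (s = 1 ∧ t = -1 ∧ m = 1 ∧ n = 0) ∨
      (s = -1 ∧ t = 1 ∧ m = 0 ∧ n = 1) := by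
  have two_zpow_inj : ∀ {k l : ℤ}, (2 : ℚ) ^ k = 2 ^ l → k = l := fun hkl =>
    (zpow_right_inj₀ two_pos (by norm_num)).mp hkl
  have hs' := (abs_eq zero_le_one).mp hs
  have ht' := (abs_eq zero_le_one).mp ht
  have h2m : (0 : ℚ) < 2 ^ m := by positivity
  have h2n : (0 : ℚ) < 2 ^ n := by positivity
  by_cases hmn : m = n
  · subst hmn
    rcases hs' with rfl | rfl <;> rcases ht' with rfl | rfl <;> try linarith
    have hm : m + 1 = 0 := two_zpow_inj (by rw [zpow_add_one₀ two_ne_zero]; linear_combination h)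
    exact Or.inl ⟨rfl, rfl, by omega, by omega⟩
  -- Distinct valuations: the ultrametric inequality forces `min m n = v₂(1) = 0`.
  have hmin := padicValRat.add_eq_min (p := 2) (by rw [h]; exact one_ne_zero)
    (by rcases hs' with rfl | rfl <;> positivity) (by rcases ht' with rfl | rfl <;> positivity)
    (by rwa [padicValRat_two_mul_two_zpow hs, padicValRat_two_mul_two_zpow ht])
  rw [h, padicValRat.one, padicValRat_two_mul_two_zpow hs,
    padicValRat_two_mul_two_zpow ht] at hmin
  rcases min_eq_iff.mp hmin.symm with ⟨rfl, -⟩ | ⟨rfl, -⟩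
  · rw [zpow_zero, mul_one] at h
    rcases hs' with rfl | rfl <;> rcases ht' with rfl | rfl <;> try linarith
    exact Or.inr (Or.inr ⟨rfl, rfl, rfl, two_zpow_inj (by rw [zpow_one]; linarith)⟩)
  · rw [zpow_zero, mul_one] at h
    rcases hs' with rfl | rfl <;> rcases ht' with rfl | rfl <;> try linarith
    exact Or.inr (Or.inl ⟨rfl, rfl, two_zpow_inj (by rw [zpow_one]; linarith), rfl⟩)

namespace RatFunc

section Eval

variable {K L : Type u} [Field K] [Field L] {f : K →+* L} {a : L} {x y : RatFunc K}

theorem eval_mul_of_eval_ne_zero (hx : eval f a x ≠ 0) (hy : eval f a y ≠ 0) :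
    eval f a (x * y) = eval f a x * eval f a y :=
  eval_mul f a (eval₂_denom_ne_zero hx) (eval₂_denom_ne_zero hy)

theorem eval_add_of_eval_ne_zero (hx : eval f a x ≠ 0) (hy : eval f a y ≠ 0) :
    eval f a (x + y) = eval f a x + eval f a y :=
  eval_add f a (eval₂_denom_ne_zero hx) (eval₂_denom_ne_zero hy)

theorem eval_inv_of_eval_ne_zero (hx : eval f a x ≠ 0) : eval f a x⁻¹ = (eval f a x)⁻¹ := by
  have hx0 : x ≠ 0 := by rintro rfl; exact hx (eval_zero f a)
  have hnum : (num x).eval₂ f a ≠ 0 := fun h => hx (by rw [eval, h, zero_div])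
  have hden : (denom x⁻¹).eval₂ f a ≠ 0 :=
    mt (Polynomial.eval₂_eq_zero_of_dvd_of_eval₂_eq_zero f a (denom_inv_dvd hx0)) hnum
  have := eval_mul f a (eval₂_denom_ne_zero hx) hden
  rw [mul_inv_cancel₀ hx0, eval_one] at this
  exact eq_inv_of_mul_eq_one_right this.symm

theorem eval_pow_of_eval_ne_zero (hx : eval f a x ≠ 0) (n : ℕ) :
    eval f a (x ^ n) = eval f a x ^ n := by
  induction n with
  | zero => simp
  | succ n ih =>
    rw [pow_succ, eval_mul_of_eval_ne_zero (ih ▸ pow_ne_zero n hx) hx, ih, pow_succ]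

theorem eval_zpow_of_eval_ne_zero (hx : eval f a x ≠ 0) (n : ℤ) :
    eval f a (x ^ n) = eval f a x ^ n := by
  cases n with
  | ofNat n => simpa using eval_pow_of_eval_ne_zero hx n
  | negSucc n =>
    rw [zpow_negSucc, zpow_negSucc, ← eval_pow_of_eval_ne_zero hx]
    exact eval_inv_of_eval_ne_zero (eval_pow_of_eval_ne_zero hx _ ▸ pow_ne_zero _ hx)

end Eval

variable {K : Type u} [Field K] {a : K}

theorem eval_C_mul_X_zpow_mul_one_sub_X_zpow (ha₀ : a ≠ 0) (ha₁ : a ≠ 1) (c : K)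
    (i j : ℤ) :
    eval (RingHom.id K) a (C c * X ^ i * (1 - X) ^ j) = c * a ^ i * (1 - a) ^ j := by
  rcases eq_or_ne c 0 with rfl | hc
  · simp
  have hb₀ : 1 - a ≠ 0 := sub_ne_zero.mpr ha₁.symm
  have hX : eval (RingHom.id K) a (X ^ i) = a ^ i := by
    rw [eval_zpow_of_eval_ne_zero (by rwa [eval_X]), eval_X]
  have hY : eval (RingHom.id K) a ((1 - X) ^ j) = (1 - a) ^ j := by
    have : eval (RingHom.id K) a (1 - X) = 1 - a := by
      rw [← map_one (algebraMap (Polynomial K) (RatFunc K)), ← algebraMap_X, ← map_sub,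
        eval_algebraMap]
      simp
    rw [eval_zpow_of_eval_ne_zero (this ▸ hb₀), this]
  have hCX : eval (RingHom.id K) a (C c * X ^ i) = c * a ^ i := by
    rw [eval_mul_of_eval_ne_zero (by simpa) (hX ▸ zpow_ne_zero i ha₀), hX, eval_C,
      RingHom.id_apply]
  rw [eval_mul_of_eval_ne_zero (hCX ▸ mul_ne_zero hc (zpow_ne_zero i ha₀))
    (hY ▸ zpow_ne_zero j hb₀), hCX, hY]

theorem add_eq_one_of_C_mul_X_zpow_add_eq_one (ha₀ : a ≠ 0) (ha₁ : a ≠ 1) {c d : K}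
    (hc : c ≠ 0) (hd : d ≠ 0) {i j k l : ℤ} (h : C c * X ^ i * (1 - X) ^ j + C d * X ^ k * (1 - X) ^ l = 1) :
    c * a ^ i * (1 - a) ^ j + d * a ^ k * (1 - a) ^ l = 1 := by
  have hb₀ : 1 - a ≠ 0 := sub_ne_zero.mpr ha₁.symm
  have hu := eval_C_mul_X_zpow_mul_one_sub_X_zpow ha₀ ha₁ c i j
  have hv := eval_C_mul_X_zpow_mul_one_sub_X_zpow ha₀ ha₁ d k l
  rw [← hu, ← hv, ← eval_add_of_eval_ne_zero, h, eval_one]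
  · rw [hu]; exact mul_ne_zero (mul_ne_zero hc (zpow_ne_zero _ ha₀)) (zpow_ne_zero _ hb₀)
  · rw [hv]; exact mul_ne_zero (mul_ne_zero hd (zpow_ne_zero _ ha₀)) (zpow_ne_zero _ hb₀)

end RatFunc

open RatFunc

theorem exponents_of_add_eq_one {ε ε' : RatFunc ℚ} (hε : ε = 1 ∨ ε = -1)
    (hε' : ε' = 1 ∨ ε' = -1) {i j k l : ℤ}
    (h : ε * nrAlpha ^ i * (1 - nrAlpha) ^ j + ε' * nrAlpha ^ k * (1 - nrAlpha) ^ l = 1) :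
    (ε = 1 ∧ i = 1 ∧ j = 0) ∨ (ε = 1 ∧ i = 0 ∧ j = 1) ∨
    (ε = 1 ∧ i = -1 ∧ j = 0) ∨ (ε = 1 ∧ i = 0 ∧ j = -1) ∨
    (ε = -1 ∧ i = 1 ∧ j = -1) ∨ (ε = -1 ∧ i = -1 ∧ j = 1) := by
  have sign : ∀ ε : RatFunc ℚ, ε = 1 ∨ ε = -1 → ∃ s : ℚ, |s| = 1 ∧ C s = ε := by
    rintro _ (rfl | rfl)
    exacts [⟨1, by simp⟩, ⟨-1, by simp⟩]
  obtain ⟨s, hs, rfl⟩ := sign ε hε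
  obtain ⟨t, ht, rfl⟩ := sign ε' hε'
  unfold nrAlpha at h
  have at_point := fun (a : ℚ) (ha₀ : a ≠ 0) (ha₁ : a ≠ 1) =>
    add_eq_one_of_C_mul_X_zpow_add_eq_one ha₀ ha₁ (abs_ne_zero.mp (hs ▸ one_ne_zero))
      (abs_ne_zero.mp (ht ▸ one_ne_zero)) h
  have at_two := at_point 2 (by norm_num) (by norm_num)
  have at_neg_one := at_point (-1) (by norm_num) (by norm_num)
  have at_half := at_point (1 / 2) (by norm_num) (by norm_num)
  norm_num at at_two at_neg_one at_half
  have half : ∀ n : ℤ, ((1 : ℚ) / 2) ^ n = 2 ^ (-n) := fun n => by rw [one_div, inv_zpow']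
  rw [half, half, half, half, mul_assoc, ← zpow_add₀ two_ne_zero, mul_assoc,
    ← zpow_add₀ two_ne_zero] at at_half
  have sgn : ∀ {r : ℚ}, |r| = 1 → ∀ n : ℤ, |r * (-1) ^ n| = 1 := fun hr n => by
    rw [abs_mul, hr, abs_neg_one_zpow, one_mul]
  have exps_two := eq_of_sign_mul_two_zpow_add_eq_one (sgn hs j) (sgn ht l) (m := i) (n := k)
    (by linear_combination at_two)
  have exps_neg_one := eq_of_sign_mul_two_zpow_add_eq_one (sgn hs i) (sgn ht k) (m := j) (n := l)
    (by linear_combination at_neg_one)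
  have exps_half := eq_of_sign_mul_two_zpow_add_eq_one hs ht at_half
  rcases exps_two with ⟨-, -, rfl, rfl⟩ | ⟨-, -, rfl, rfl⟩ | ⟨-, -, rfl, rfl⟩ <;>
    rcases exps_neg_one with ⟨-, -, rfl, rfl⟩ | ⟨-, -, rfl, rfl⟩ | ⟨-, -, rfl, rfl⟩ <;>
    rcases exps_half with ⟨rfl, -, hm, hn⟩ | ⟨rfl, -, hm, hn⟩ | ⟨rfl, -, hm, hn⟩ <;>
    first | (exfalso; omega) | simp

@[simp]
theorem nrAlpha_ne_zero : nrAlpha ≠ 0 := X_ne_zero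

@[simp]
theorem one_sub_nrAlpha_ne_zero : 1 - nrAlpha ≠ 0 := fun h => by
  simpa [nrAlpha] using congrArg (eval (RingHom.id ℚ) 0) (sub_eq_zero.mp h)

@[simp]
theorem nrAlpha_sub_one_ne_zero : nrAlpha - 1 ≠ 0 := by
  rw [← neg_sub, neg_ne_zero]
  exact one_sub_nrAlpha_ne_zero

theorem sign_mul_zpow_mem_of_add_eq_one {ε ε' : RatFunc ℚ} (hε : ε = 1 ∨ ε = -1)
    (hε' : ε' = 1 ∨ ε' = -1) {i j k l : ℤ}
    (h : ε * nrAlpha ^ i * (1 - nrAlpha) ^ j + ε' * nrAlpha ^ k * (1 - nrAlpha) ^ l = 1) :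
    ε * nrAlpha ^ i * (1 - nrAlpha) ^ j ∈ ({nrAlpha, 1 - nrAlpha, (1 - nrAlpha)⁻¹,
      nrAlpha / (nrAlpha - 1), (nrAlpha - 1) / nrAlpha, nrAlpha⁻¹} : Set (RatFunc ℚ)) := by
  rcases exponents_of_add_eq_one hε hε' h with
    ⟨rfl, rfl, rfl⟩ | ⟨rfl, rfl, rfl⟩ | ⟨rfl, rfl, rfl⟩ | ⟨rfl, rfl, rfl⟩ |
    ⟨rfl, rfl, rfl⟩ | ⟨rfl, rfl, rfl⟩
  · simp
  · simp
  · simp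
  · simp
  · rw [show (-1 : RatFunc ℚ) * nrAlpha ^ (1 : ℤ) * (1 - nrAlpha) ^ (-1 : ℤ) =
      nrAlpha / (nrAlpha - 1) by field_simp; ring]
    simp
  · rw [show (-1 : RatFunc ℚ) * nrAlpha ^ (-1 : ℤ) * (1 - nrAlpha) ^ (1 : ℤ) =
      (nrAlpha - 1) / nrAlpha by field_simp; ring]
    simp

/-- The fundamental elements of `𝕌₁` are exactly
`{0, 1, α, 1-α, 1/(1-α), α/(α-1), (α-1)/α, 1/α}`. -/
theorem fundamental_elements_of_U1 :
    {p : RatFunc ℚ | IsFund p} =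
      ({0, 1, nrAlpha, 1 - nrAlpha, (1 - nrAlpha)⁻¹,
        nrAlpha / (nrAlpha - 1), (nrAlpha - 1) / nrAlpha, nrAlpha⁻¹} :
        Set (RatFunc ℚ)) := by
  ext p
  constructor
  · rintro ⟨rfl | ⟨ε, i, j, hε, rfl⟩, hq⟩
    · exact Or.inl rfl
    rcases hq with hq | ⟨ε', k, l, hε', hq⟩
    · exact Or.inr (Or.inl (sub_eq_zero.mp hq).symm)
    exact Or.inr (Or.inr (sign_mul_zpow_mem_of_add_eq_one hε hε' (k := k) (l := l)
      (by linear_combination -hq)))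
  · rintro (rfl | rfl | rfl | rfl | rfl | rfl | rfl | rfl)
    · exact ⟨Or.inl rfl, Or.inr ⟨1, 0, 0, .inl rfl, by simp⟩⟩
    · exact ⟨Or.inr ⟨1, 0, 0, .inl rfl, by simp⟩, Or.inl (sub_self 1)⟩
    · exact ⟨Or.inr ⟨1, 1, 0, .inl rfl, by simp⟩, Or.inr ⟨1, 0, 1, .inl rfl, by simp⟩⟩
    · exact ⟨Or.inr ⟨1, 0, 1, .inl rfl, by simp⟩, Or.inr ⟨1, 1, 0, .inl rfl, by simp⟩⟩
    · exact ⟨Or.inr ⟨1, 0, -1, .inl rfl, by simp⟩,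
        Or.inr ⟨-1, 1, -1, .inr rfl, by field_simp; ring⟩⟩
    · exact ⟨Or.inr ⟨-1, 1, -1, .inr rfl, by field_simp; ring⟩,
        Or.inr ⟨1, 0, -1, .inl rfl, by field_simp; ring⟩⟩
    · exact ⟨Or.inr ⟨-1, -1, 1, .inr rfl, by field_simp; ring⟩,
        Or.inr ⟨1, -1, 0, .inl rfl, by field_simp; ring⟩⟩
    · exact ⟨Or.inr ⟨1, -1, 0, .inl rfl, by simp⟩,
        Or.inr ⟨-1, -1, 1, .inr rfl, by field_simp; ring⟩⟩
end

section
/- No fundamental element of the near-regular partial field 𝕌₁, other than 1, has the form ±α^i(1-α)^i for an integer i; that is, if ±α^i(1-α)^i is a fundamental element then it equals 1 (so i = 0 with sign +). -/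
/-! Write `x = ±α^i (1-α)^i` and `1 - x = ±α^a (1-α)^b`. At each of the places `α = 0`,
`α = 1`, `α = ∞` of `ℚ(α)` the ultrametric inequality applied to `x + (1 - x) = 1` says that the
larger of the two valuations is at least `1`, and is exactly `1` when they differ. In `ℤᵐ⁰` the
valuations of `x` at these places are `exp (-i), exp (-i), exp (2i)` and those of `1 - x` are
`exp (-a), exp (-b), exp (a + b)`, and the resulting constraints force `i = a = b = 0`. What is
left is `±1 ± 1 = 1`, which is impossible. If instead `1 - x = 0`, the valuation at `0` of
`x = 1` gives `i = 0`. -/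

open Polynomial IsDedekindDomain WithZero

namespace Valuation

variable {K : Type*} [Field K]

section

variable {Γ₀ : Type*} [LinearOrderedCommGroupWithZero Γ₀] (v : Valuation K Γ₀)

theorem one_le_max_of_add_eq_one {x y : K} (h : x + y = 1) : 1 ≤ max (v x) (v y) := by
  simpa [h] using v.map_add x y

theorem max_eq_one_of_add_eq_one {x y : K} (h : x + y = 1) (hne : v x ≠ v y) :
    max (v x) (v y) = 1 := by
  simpa [h] using (v.map_add_of_distinct_val hne).symm

theorem map_sign_mul_zpow_mul_zpow {ε : K} (hε : ε = 1 ∨ ε = -1) (α : K) (i j : ℤ) :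
    v (ε * α ^ i * (1 - α) ^ j) = v α ^ i * v (1 - α) ^ j := by
  obtain rfl | rfl := hε <;> simp

end

variable (v : Valuation K ℤᵐ⁰)

theorem max_exponent_of_add_eq_one {x y : K} {s t : ℤ} (h : x + y = 1)
    (hx : v x = exp s) (hy : v y = exp t) :
    0 ≤ max s t ∧ (s ≠ t → max s t = 0) := by
  have hmax : max (v x) (v y) = exp (max s t) := by
    rw [hx, hy]
    exact (Monotone.map_max fun _ _ ↦ exp_le_exp.2).symm
  refine ⟨?_, fun hst ↦ ?_⟩
  · have := v.one_le_max_of_add_eq_one h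
    rwa [hmax, ← exp_zero, exp_le_exp] at this
  · have hne : v x ≠ v y := by rwa [hx, hy, Ne, exp_inj]
    have := v.max_eq_one_of_add_eq_one h hne
    rwa [hmax, exp_eq_one] at this

theorem map_sign_mul_zpow_mul_zpow_eq_exp {ε α : K} {p q : ℤ} (hε : ε = 1 ∨ ε = -1)
    (hα : v α = exp p) (hα' : v (1 - α) = exp q) (i j : ℤ) :
    v (ε * α ^ i * (1 - α) ^ j) = exp (p * i + q * j) := by
  rw [v.map_sign_mul_zpow_mul_zpow hε, hα, hα', exp_add, ← exp_zsmul, ← exp_zsmul,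
    smul_eq_mul, smul_eq_mul, mul_comm i, mul_comm j]

theorem max_exponent_of_add_eq_one_of_sign_mul_zpow_mul_zpow {ε δ α : K} {p q : ℤ}
    (hε : ε = 1 ∨ ε = -1) (hδ : δ = 1 ∨ δ = -1) (hα : v α = exp p) (hα' : v (1 - α) = exp q)
    {i j a b : ℤ} (h : ε * α ^ i * (1 - α) ^ j + δ * α ^ a * (1 - α) ^ b = 1) :
    0 ≤ max (p * i + q * j) (p * a + q * b) ∧
      (p * i + q * j ≠ p * a + q * b → max (p * i + q * j) (p * a + q * b) = 0) :=
  v.max_exponent_of_add_eq_one h (v.map_sign_mul_zpow_mul_zpow_eq_exp hε hα hα' i j)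
    (v.map_sign_mul_zpow_mul_zpow_eq_exp hδ hα hα' a b)

end Valuation

namespace Polynomial

variable (F : Type*) [Field F]

noncomputable def idealXSubC (a : F) : HeightOneSpectrum F[X] where
  asIdeal := Ideal.span {X - C a}
  isPrime := (Ideal.span_singleton_prime (X_sub_C_ne_zero a)).2 (prime_X_sub_C a)
  ne_bot := by simpa using X_sub_C_ne_zero a

theorem valuation_X_sub_C_eq_neg_one (a : F) :
    (idealXSubC F a).valuation (RatFunc F) (RatFunc.X - RatFunc.C a) = exp (-1 : ℤ) := by
  rw [← RatFunc.algebraMap_X, ← RatFunc.algebraMap_C, ← map_sub,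
    HeightOneSpectrum.valuation_of_algebraMap]
  exact HeightOneSpectrum.intValuation_singleton _ (X_sub_C_ne_zero a) rfl

theorem valuation_idealX_one_sub_X :
    (idealX F).valuation (RatFunc F) (1 - RatFunc.X) = exp (0 : ℤ) :=
  Valuation.map_one_sub_of_lt _ (by rw [valuation_X_eq_neg_one, ← exp_zero, exp_lt_exp]; simp)

theorem valuation_idealXSubC_one_sub_X :
    (idealXSubC F 1).valuation (RatFunc F) (1 - RatFunc.X) = exp (-1 : ℤ) := by
  rw [Valuation.map_sub_swap, ← map_one RatFunc.C, valuation_X_sub_C_eq_neg_one]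

theorem valuation_idealXSubC_one_X :
    (idealXSubC F 1).valuation (RatFunc F) RatFunc.X = exp (0 : ℤ) := by
  rw [← sub_sub_cancel 1 RatFunc.X, exp_zero]
  exact Valuation.map_one_sub_of_lt _ (by
    rw [valuation_idealXSubC_one_sub_X, ← exp_zero, exp_lt_exp]; simp)

end Polynomial

theorem RatFunc.inftyValuation_one_sub_X (F : Type*) [Field F] [DecidableEq (RatFunc F)] :
    RatFunc.inftyValuation F (1 - RatFunc.X) = exp (1 : ℤ) := by
  rw [Valuation.map_sub_eq_of_lt_right _ (by simp [← exp_zero]), RatFunc.inftyValuation.X]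

/-- No fundamental element of `𝕌₁` other than `1` has the form `±α^i (1-α)^i`:
if `±α^i (1-α)^i` is fundamental then the sign is `+` and `i = 0`, so it equals `1`. -/
theorem fundamental_not_of_form_pm_alpha_pow_eq :
    ∀ (ε : RatFunc ℚ) (i : ℤ), (ε = 1 ∨ ε = -1) →
      IsFund (ε * nrAlpha ^ i * (1 - nrAlpha) ^ i) →
      ε = 1 ∧ i = 0 ∧ ε * nrAlpha ^ i * (1 - nrAlpha) ^ i = 1 := by
  classical
  rintro ε i hε ⟨-, hzero | ⟨δ, a, b, hδ, hcompl⟩⟩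
  · have hT : ε * nrAlpha ^ i * (1 - nrAlpha) ^ i = 1 := (sub_eq_zero.1 hzero).symm
    have hi : i = 0 := by
      have hv := Valuation.map_sign_mul_zpow_mul_zpow_eq_exp _ (α := nrAlpha) hε
        (valuation_X_eq_neg_one ℚ) (valuation_idealX_one_sub_X ℚ) i i
      rw [hT, map_one, eq_comm, exp_eq_one] at hv
      omega
    exact ⟨by simpa [hi] using hT, hi, hT⟩
  · exfalso
    have hsum :
        ε * nrAlpha ^ i * (1 - nrAlpha) ^ i + δ * nrAlpha ^ a * (1 - nrAlpha) ^ b = 1 := by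
      rw [← hcompl]; ring
    have h₀ := Valuation.max_exponent_of_add_eq_one_of_sign_mul_zpow_mul_zpow _ hε hδ
      (valuation_X_eq_neg_one ℚ) (valuation_idealX_one_sub_X ℚ) hsum
    have h₁ := Valuation.max_exponent_of_add_eq_one_of_sign_mul_zpow_mul_zpow _ hε hδ
      (valuation_idealXSubC_one_X ℚ) (valuation_idealXSubC_one_sub_X ℚ) hsum
    have hinf := Valuation.max_exponent_of_add_eq_one_of_sign_mul_zpow_mul_zpow _ hε hδ
      (RatFunc.inftyValuation.X ℚ) (RatFunc.inftyValuation_one_sub_X ℚ) hsum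
    obtain ⟨rfl, rfl, rfl⟩ : i = 0 ∧ a = 0 ∧ b = 0 := by omega
    obtain rfl | rfl := hε <;> obtain rfl | rfl := hδ <;> norm_num at hsum
end

section
/- In the near-regular partial field 𝕌₁, if p = α^i(1-α)^j satisfies 2j = -i and p or -p is a fundamental element, then p = 1 (i = j = 0). -/
lemma map_units_zpow {F R G₀ : Type*} [Monoid R] [GroupWithZero G₀] [FunLike F R G₀]
    [MonoidHomClass F R G₀] (f : F) (u : Rˣ) (i : ℤ) : f ↑(u ^ i) = f ↑u ^ i := by
  rw [← MonoidHom.coe_coe f, ← Units.coe_map, map_zpow, Units.val_zpow_eq_zpow_val,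
    Units.coe_map]

namespace Polynomial

lemma X_mul_one_sub_X_ne_zero {K : Type*} [Field K] : (X * (1 - X) : K[X]) ≠ 0 := by
  refine mul_ne_zero X_ne_zero fun h => ?_
  simpa using congrArg (eval 0) h

end Polynomial

open Polynomial in
/-- `K[X, 1/X, 1/(1-X)]`, the coordinate ring of `ℙ¹ ∖ {0, 1, ∞}`. -/
abbrev ThricePuncturedLine (K : Type*) [Field K] := Localization.Away (X * (1 - X) : K[X])

namespace ThricePuncturedLine

open Polynomial

variable {K : Type*} [Field K]

noncomputable def toRatFunc : ThricePuncturedLine K →+* RatFunc K :=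
  IsLocalization.Away.lift (X * (1 - X)) (g := algebraMap K[X] (RatFunc K))
    (IsUnit.mk0 _ <| (map_ne_zero_iff _ (RatFunc.algebraMap_injective K)).mpr
      X_mul_one_sub_X_ne_zero)

noncomputable def eval (a : K) (ha : a * (1 - a) ≠ 0) : ThricePuncturedLine K →+* K :=
  IsLocalization.Away.lift (X * (1 - X)) (g := evalRingHom a) (by simpa using ha.isUnit)

lemma toRatFunc_injective : Function.Injective (toRatFunc (K := K)) :=
  (IsLocalization.lift_injective_iff _).mpr fun _ _ =>
    ((IsLocalization.injective _ (powers_le_nonZeroDivisors_of_noZeroDivisors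
      X_mul_one_sub_X_ne_zero)).eq_iff).trans (RatFunc.algebraMap_injective K).eq_iff.symm

lemma toRatFunc_algebraMap (p : K[X]) :
    toRatFunc (algebraMap K[X] (ThricePuncturedLine K) p) = algebraMap K[X] (RatFunc K) p :=
  IsLocalization.Away.lift_eq _ _ p

lemma eval_algebraMap (a : K) (ha : a * (1 - a) ≠ 0) (p : K[X]) :
    eval a ha (algebraMap K[X] (ThricePuncturedLine K) p) = p.eval a :=
  IsLocalization.Away.lift_eq _ _ p

noncomputable def unitX : (ThricePuncturedLine K)ˣ :=
  (IsLocalization.Away.isUnit_of_dvd _ (dvd_mul_right (X : K[X]) (1 - X))).unit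

noncomputable def unitOneSubX : (ThricePuncturedLine K)ˣ :=
  (IsLocalization.Away.isUnit_of_dvd _ (dvd_mul_left (1 - X : K[X]) X)).unit

noncomputable def monomial (i j : ℤ) : (ThricePuncturedLine K)ˣ := unitX ^ i * unitOneSubX ^ j

lemma toRatFunc_monomial (i j : ℤ) :
    toRatFunc ((monomial i j : (ThricePuncturedLine K)ˣ) : ThricePuncturedLine K) =
      RatFunc.X ^ i * (1 - RatFunc.X) ^ j := by
  simp only [monomial, Units.val_mul, map_mul, map_units_zpow, unitX, unitOneSubX,
    IsUnit.unit_spec, toRatFunc_algebraMap]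
  simp

lemma eval_monomial (a : K) (ha : a * (1 - a) ≠ 0) (i j : ℤ) :
    eval a ha ((monomial i j : (ThricePuncturedLine K)ˣ) : ThricePuncturedLine K) =
      a ^ i * (1 - a) ^ j := by
  simp only [monomial, Units.val_mul, map_mul, map_units_zpow, unitX, unitOneSubX,
    IsUnit.unit_spec, eval_algebraMap]
  simp

lemma toRatFunc_algebraMap_base (c : K) :
    toRatFunc (algebraMap K (ThricePuncturedLine K) c) = RatFunc.C c := by
  rw [IsScalarTower.algebraMap_apply K K[X], toRatFunc_algebraMap, algebraMap_eq,
    RatFunc.algebraMap_C]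

lemma eval_algebraMap_base (a : K) (ha : a * (1 - a) ≠ 0) (c : K) :
    eval a ha (algebraMap K (ThricePuncturedLine K) c) = c := by
  rw [IsScalarTower.algebraMap_apply K K[X], eval_algebraMap, algebraMap_eq, eval_C]

end ThricePuncturedLine

lemma padicValRat_two_self : padicValRat 2 (2 : ℚ) = 1 := by
  exact_mod_cast padicValRat.self (p := 2) one_lt_two

lemma padicValRat_two_of_abs_eq_zpow {x : ℚ} {k : ℤ} (hx : |x| = 2 ^ k) :
    padicValRat 2 x = k := by
  rcases (abs_eq (by positivity)).mp hx with rfl | rfl <;> simp [padicValRat_two_self]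

lemma exponent_of_add_eq_one_of_abs_eq_two_zpow {x y : ℚ} {m n : ℤ} (hx : |x| = 2 ^ m)
    (hy : |y| = 2 ^ n) (h : x + y = 1) : m = -1 ∨ m = 0 ∨ m = 1 := by
  have hx0 : x ≠ 0 := abs_ne_zero.mp (hx ▸ by positivity)
  have hy0 : y ≠ 0 := abs_ne_zero.mp (hy ▸ by positivity)
  have hvx := padicValRat_two_of_abs_eq_zpow hx
  have hvy := padicValRat_two_of_abs_eq_zpow hy
  rcases eq_or_ne m n with rfl | hmn
  · have hxy : x = y := by
      rcases abs_eq_abs.mp (hx.trans hy.symm) with hxy | hxy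
      · exact hxy
      · rw [hxy] at h; norm_num at h
    rw [show x = 2⁻¹ by linarith, padicValRat.inv, padicValRat_two_self] at hvx
    omega
  · have hmin := padicValRat.add_eq_min (p := 2) (by simp [h]) hx0 hy0 (by rwa [hvx, hvy])
    rw [h, padicValRat.one, hvx, hvy] at hmin
    rcases min_choice m n with hm | hn
    · omega
    · have hy1 : |y| = 1 := by rw [hy, ← hn, ← hmin, zpow_zero]
      have hx2 : x = 2 := by
        rcases (abs_eq zero_le_one).mp hy1 with rfl | rfl
        · exact absurd (by linarith) hx0
        · linarith
      rw [hx2, padicValRat_two_self] at hvx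
      omega

open ThricePuncturedLine

noncomputable abbrev evalTwo : ThricePuncturedLine ℚ →+* ℚ := eval 2 (by norm_num)

lemma abs_evalTwo_monomial (i j : ℤ) :
    |evalTwo (monomial i j : (ThricePuncturedLine ℚ)ˣ)| = 2 ^ i := by
  simp [eval_monomial, abs_zpow, show |(1 : ℚ) - 2| = 1 by norm_num]

lemma exists_toRatFunc_eq_of_mem_U1 {x : RatFunc ℚ} (hx : x ∈ U1) :
    ∃ y, toRatFunc y = x ∧ (evalTwo y = 0 ∨ ∃ n : ℤ, |evalTwo y| = 2 ^ n) := by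
  rcases hx with rfl | ⟨ε, i, j, hε | hε, rfl⟩
  · exact ⟨0, map_zero _, Or.inl (map_zero _)⟩
  · refine ⟨(monomial i j : (ThricePuncturedLine ℚ)ˣ), ?_,
      Or.inr ⟨i, abs_evalTwo_monomial i j⟩⟩
    rw [toRatFunc_monomial, hε, one_mul, nrAlpha]
  · refine ⟨(-monomial i j : (ThricePuncturedLine ℚ)ˣ), ?_, Or.inr ⟨i, ?_⟩⟩
    · rw [Units.val_neg, map_neg, toRatFunc_monomial, hε, neg_one_mul, neg_mul, nrAlpha]
    · rw [Units.val_neg, map_neg, abs_neg, abs_evalTwo_monomial]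

lemma exponent_of_one_sub_mem_U1 {σ : ℚ} (hσ : |σ| = 1) {i j : ℤ}
    (h : 1 - RatFunc.C σ * (nrAlpha ^ i * (1 - nrAlpha) ^ j) ∈ U1) :
    i = -1 ∨ i = 0 ∨ i = 1 := by
  obtain ⟨y, hy, hy2⟩ := exists_toRatFunc_eq_of_mem_U1 h
  set z : ThricePuncturedLine ℚ :=
    algebraMap ℚ _ σ * (monomial i j : (ThricePuncturedLine ℚ)ˣ) with hz
  have hy' : y = 1 - z := toRatFunc_injective <| by
    rw [hy, map_sub, map_one, hz, map_mul, toRatFunc_algebraMap_base, toRatFunc_monomial, nrAlpha]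
  set x := evalTwo z with hx
  have hxy : x + evalTwo y = 1 := by rw [hy', map_sub, map_one]; ring
  have habs : |x| = 2 ^ i := by
    rw [hx, hz, map_mul, abs_mul, eval_algebraMap_base, hσ, one_mul, abs_evalTwo_monomial]
  rcases hy2 with h0 | ⟨n, hn⟩
  · rw [h0, add_zero] at hxy
    have := padicValRat_two_of_abs_eq_zpow habs
    rw [hxy, padicValRat.one] at this
    omega
  · exact exponent_of_add_eq_one_of_abs_eq_two_zpow habs hn hxy

/-- If `p = α^i (1-α)^j` with `2j = -i`, and `p` or `-p` is a fundamental element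
of `𝕌₁`, then `p = 1` (so `i = j = 0`). -/
theorem fundamental_with_two_j_eq_neg_i (i j : ℤ) (hij : 2 * j = -i)
    (hfund : IsFund (nrAlpha ^ i * (1 - nrAlpha) ^ j) ∨
      IsFund (-(nrAlpha ^ i * (1 - nrAlpha) ^ j))) :
    nrAlpha ^ i * (1 - nrAlpha) ^ j = 1 ∧ i = 0 ∧ j = 0 := by
  obtain ⟨σ, hσ, h⟩ :
      ∃ σ : ℚ, |σ| = 1 ∧ 1 - RatFunc.C σ * (nrAlpha ^ i * (1 - nrAlpha) ^ j) ∈ U1 := by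
    rcases hfund with ⟨-, h⟩ | ⟨-, h⟩
    · exact ⟨1, abs_one, by simpa using h⟩
    · exact ⟨-1, by simp, by simpa using h⟩
  have hi : i = 0 := by
    rcases exponent_of_one_sub_mem_U1 hσ h with hi | hi | hi <;> omega
  obtain rfl : j = 0 := by omega
  subst hi
  simp
end
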